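/- If C is an sᵢ-stable set of transpositions, then the kernel of ∂ᵢ : H_C → H_C equals its image, and both equal H_C^{∗sᵢ} = {f ∈ H_C : f ∗ sᵢ = f}. -/

import Mathlib

open MvPolynomial

/-- The ring `H = Fun(Sₙ, ℂ[t₁,…,tₙ])`, with pointwise operations. -/
abbrev Hr (n : ℕ) := Equiv.Perm (Fin n) → MvPolynomial (Fin n) ℂ

/-- The element `xᵢ ∈ H`, given by `v ↦ t_{v(i)}`. -/
noncomputable def xH {n : ℕ} (i : Fin n) : Hr n := fun v => X (v i)

/-- The element `tᵢ ∈ H`, the constant function `v ↦ tᵢ`. -/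
noncomputable def tH {n : ℕ} (i : Fin n) : Hr n := fun _ => X i

/-- The right star action on `H`: `(g ∗ w)(v) = g(v w⁻¹)`. -/
noncomputable def starH {n : ℕ} (g : Hr n) (w : Equiv.Perm (Fin n)) : Hr n :=
  fun v => g (v * w⁻¹)

/-- The left dot action on `H`:
`(w · g)(v; t₁,…,tₙ) = g(w⁻¹ v; t_{w(1)},…,t_{w(n)})`. -/
noncomputable def dotH {n : ℕ} (w : Equiv.Perm (Fin n)) (g : Hr n) : Hr n :=
  fun v => rename (⇑w) (g (w⁻¹ * v))


/-- `f` satisfies the divisibility condition `τ` for a transposition `τ = (j ↔ k)`: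
`f − f∗τ` is a multiple of `xⱼ − xₖ` in `H` (i.e. pointwise, with quotients in
`ℂ[t₁,…,tₙ]`). -/
def condP {n : ℕ} (τ : Equiv.Perm (Fin n)) (f : Hr n) : Prop :=
  ∀ j k : Fin n, τ = Equiv.swap j k → (xH j - xH k) ∣ (f - starH f τ)

/-- The subring `H_C` of elements satisfying all conditions in a set `C` of
transpositions. -/
def HCset {n : ℕ} (C : Set (Equiv.Perm (Fin n))) : Set (Hr n) :=
  {f | ∀ τ ∈ C, condP τ f}

section aux
variable {n : ℕ}

lemma starH_sub (p q : Hr n) (w : Equiv.Perm (Fin n)) :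
    starH (p - q) w = starH p w - starH q w := rfl
lemma starH_mul (p q : Hr n) (w : Equiv.Perm (Fin n)) :
    starH (p * q) w = starH p w * starH q w := rfl
lemma starH_starH (g : Hr n) (w w' : Equiv.Perm (Fin n)) :
    starH (starH g w) w' = starH g (w * w') := by
  funext v; simp [starH, mul_assoc, mul_inv_rev]
lemma starH_one (g : Hr n) : starH g 1 = g := by funext v; simp [starH]
lemma starH_xH (i : Fin n) (w : Equiv.Perm (Fin n)) :
    starH (xH i) w = xH (w⁻¹ i) := by
  funext v; simp [starH, xH]

lemma hr_dvd_of_forall {p q : Hr n} (h : ∀ v, p v ∣ q v) : p ∣ q :=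
  ⟨fun v => (h v).choose, funext fun v => (h v).choose_spec⟩

lemma X_sub_X_ne {i j : Fin n} (h : i ≠ j) :
    (X i - X j : MvPolynomial (Fin n) ℂ) ≠ 0 :=
  sub_ne_zero.mpr (fun he => h (MvPolynomial.X_injective he))

noncomputable def psi (j k : Fin n) :
    MvPolynomial (Fin n) ℂ →ₐ[ℂ] MvPolynomial (Fin n) ℂ :=
  aeval (fun i => if i = j then X k else X i)

lemma psi_X (j k i : Fin n) : psi j k (X i) = if i = j then X k else X i :=
  aeval_X _ i

lemma psi_gen (j k : Fin n) : psi j k (X j - X k) = 0 := by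
  rw [map_sub, psi_X, psi_X, if_pos rfl]
  by_cases h : k = j <;> simp [h]

lemma dvd_iff_psi (j k : Fin n) (p : MvPolynomial (Fin n) ℂ) :
    (X j - X k) ∣ p ↔ psi j k p = 0 := by
  constructor
  · rintro ⟨q, rfl⟩; rw [map_mul, psi_gen, zero_mul]
  · intro hp
    have hQ : ∀ q, Ideal.Quotient.mk (Ideal.span {(X j - X k : MvPolynomial (Fin n) ℂ)}) (psi j k q)
        = Ideal.Quotient.mk _ q := by
      have hcomp : (Ideal.Quotient.mkₐ ℂ (Ideal.span {(X j - X k : MvPolynomial (Fin n) ℂ)})).comp (psi j k)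
          = Ideal.Quotient.mkₐ ℂ (Ideal.span {(X j - X k : MvPolynomial (Fin n) ℂ)}) := by
        apply MvPolynomial.algHom_ext
        intro i
        simp only [AlgHom.comp_apply, psi_X]
        split_ifs with h
        · subst h
          simp only [Ideal.Quotient.mkₐ_eq_mk]
          rw [Ideal.Quotient.eq]
          have hmem : (X i - X k : MvPolynomial (Fin n) ℂ) ∈ Ideal.span {(X i - X k : MvPolynomial (Fin n) ℂ)} :=
            Ideal.subset_span (Set.mem_singleton _)
          simpa using neg_mem hmem
        · rfl
      intro q
      have := congrArg (fun φ => φ q) hcomp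
      simpa using this
    rw [← Ideal.mem_span_singleton, ← Ideal.Quotient.eq_zero_iff_mem, ← hQ p, hp, map_zero]

lemma dvd_xH_sub_swap (j k c : Fin n) :
    (xH j - xH k) ∣ (xH c - xH (Equiv.swap j k c)) := by
  rcases eq_or_ne c j with rfl | hcj
  · rw [Equiv.swap_apply_left]
  · rcases eq_or_ne c k with rfl | hck
    · rw [Equiv.swap_apply_right]
      exact ⟨-1, by ring⟩
    · rw [Equiv.swap_apply_of_ne_of_ne hcj hck]
      simp
end aux


/-- for an `s`-stable set `C` (`s = swap a b ∈ C`, `b = a + 1`,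
`sCs = C`), the kernel and the image of the divided difference on `HCset C` both
equal `{f ∈ HCset C : f ∗ s = f}`.  Kernel membership for `f ∈ HCset C` means
`f - f∗s = (xH a - xH b) * 0`; image membership means there is `g ∈ HCset C` with
`g - g∗s = (xH a - xH b) * f`. -/
theorem kernel_eq_image (n : ℕ) (a b : Fin n) (hab : (a : ℕ) + 1 = b)
    (C : Set (Equiv.Perm (Fin n)))
    (hC : ∀ τ ∈ C, Equiv.Perm.IsSwap τ)
    (hs : Equiv.swap a b ∈ C)
    (hstab : ∀ τ, τ ∈ C ↔ Equiv.swap a b * τ * Equiv.swap a b ∈ C) :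
    (∀ f ∈ HCset C,
      (f - starH f (Equiv.swap a b) = (xH a - xH b) * (0 : Hr n)) ↔
        starH f (Equiv.swap a b) = f) ∧
    (∀ f : Hr n,
      (∃ g ∈ HCset C, g - starH g (Equiv.swap a b) = (xH a - xH b) * f) ↔
        (f ∈ HCset C ∧ starH f (Equiv.swap a b) = f)) := by
  have hab' : a ≠ b := by
    intro h
    rw [h] at hab
    omega
  constructor
  · intro f _
    rw [mul_zero, sub_eq_zero]
    exact eq_comm
  · intro f
    constructor
    · rintro ⟨g, hg, hgf⟩
      -- Step A : f ∗ s = f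
      have Es : starH g (Equiv.swap a b) - g = (xH b - xH a) * starH f (Equiv.swap a b) := by
        have h1 := congrArg (fun p => starH p (Equiv.swap a b)) hgf
        simp only [starH_sub, starH_mul, starH_starH] at h1
        rw [Equiv.swap_mul_self, starH_one, starH_xH, starH_xH, Equiv.swap_inv,
          Equiv.swap_apply_left, Equiv.swap_apply_right] at h1
        exact h1
      have hfs : starH f (Equiv.swap a b) = f := by
        have E2 : (xH a - xH b) * f = (xH a - xH b) * starH f (Equiv.swap a b) := by
          linear_combination -hgf - Es
        funext v
        have h3 : (X (v a) - X (v b)) * f v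
            = (X (v a) - X (v b)) * starH f (Equiv.swap a b) v := congrFun E2 v
        have hA : (X (v a) - X (v b) : MvPolynomial (Fin n) ℂ) ≠ 0 :=
          X_sub_X_ne (fun he => hab' (v.injective he))
        exact (mul_left_cancel₀ hA h3).symm
      refine ⟨?_, hfs⟩
      intro τ hτ j k hjk
      subst hjk
      by_cases hts : Equiv.swap j k = Equiv.swap a b
      · rw [hts, hfs, sub_self]
        exact dvd_zero _
      · -- main case
        have d1 : (xH j - xH k) ∣ (g - starH g (Equiv.swap j k)) := hg _ hτ j k rfl
        have hτ' : Equiv.swap a b * Equiv.swap j k * Equiv.swap a b ∈ C := (hstab _).1 hτ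
        have hτ'eq : Equiv.swap a b * Equiv.swap j k * Equiv.swap a b
            = Equiv.swap (Equiv.swap a b j) (Equiv.swap a b k) := by
          rw [Equiv.swap_apply_apply, Equiv.swap_inv]
        obtain ⟨h2, hh2⟩ := hg _ hτ' (Equiv.swap a b j) (Equiv.swap a b k) hτ'eq
        have d2 : (xH j - xH k) ∣ (starH g (Equiv.swap a b)
            - starH g (Equiv.swap a b * Equiv.swap j k)) := by
          refine ⟨starH h2 (Equiv.swap a b), ?_⟩
          have h4 := congrArg (fun p => starH p (Equiv.swap a b)) hh2
          simp only [starH_sub, starH_mul, starH_starH, starH_xH] at h4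
          rw [mul_assoc, Equiv.swap_mul_self, mul_one, Equiv.swap_inv,
            Equiv.swap_apply_self, Equiv.swap_apply_self] at h4
          exact h4
        have d3 : (xH j - xH k) ∣ ((xH a - xH (Equiv.swap j k a)) - (xH b - xH (Equiv.swap j k b))) :=
          dvd_sub (dvd_xH_sub_swap j k a) (dvd_xH_sub_swap j k b)
        have Ew : starH g (Equiv.swap j k) - starH g (Equiv.swap a b * Equiv.swap j k)
            = (xH (Equiv.swap j k a) - xH (Equiv.swap j k b)) * starH f (Equiv.swap j k) := by
          have h1 := congrArg (fun p => starH p (Equiv.swap j k)) hgf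
          simp only [starH_sub, starH_mul, starH_starH] at h1
          rw [starH_xH, starH_xH, Equiv.swap_inv] at h1
          exact h1
        have key : (xH a - xH b) * (f - starH f (Equiv.swap j k))
            = (g - starH g (Equiv.swap j k))
              - (starH g (Equiv.swap a b) - starH g (Equiv.swap a b * Equiv.swap j k))
              - ((xH a - xH (Equiv.swap j k a)) - (xH b - xH (Equiv.swap j k b)))
                  * starH f (Equiv.swap j k) := by
          linear_combination Ew - hgf
        have total : (xH j - xH k) ∣ (xH a - xH b) * (f - starH f (Equiv.swap j k)) := by
          rw [key]
          exact dvd_sub (dvd_sub d1 d2) (d3.mul_right _)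
        obtain ⟨W, hW⟩ := total
        have hne1 : ¬(a = j ∧ b = k) := fun ⟨h1, h2⟩ => hts (by rw [h1, h2])
        have hne2 : ¬(a = k ∧ b = j) := fun ⟨h1, h2⟩ => hts (by rw [h1, h2, Equiv.swap_comm])
        apply hr_dvd_of_forall
        intro v
        rw [Pi.sub_apply (xH j) (xH k) v]
        show (X (v j) - X (v k)) ∣ (f - starH f (Equiv.swap j k)) v
        rw [dvd_iff_psi]
        have hWv : (X (v a) - X (v b)) * (f - starH f (Equiv.swap j k)) v
            = (X (v j) - X (v k)) * W v := congrFun hW v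
        have h0 : psi (v j) (v k) ((X (v a) - X (v b))
            * (f - starH f (Equiv.swap j k)) v) = 0 := by
          rw [hWv, map_mul, psi_gen, zero_mul]
        rw [map_mul] at h0
        have hne : psi (v j) (v k) (X (v a) - X (v b)) ≠ 0 := by
          rw [map_sub, psi_X, psi_X]
          split_ifs with h1 h2 h2
          · exact absurd (v.injective (h1.trans h2.symm)) hab'
          · exact X_sub_X_ne (fun he => hne1 ⟨v.injective h1, (v.injective he).symm⟩)
          · exact X_sub_X_ne (fun he => hne2 ⟨v.injective he, v.injective h2⟩)
          · exact X_sub_X_ne (fun he => hab' (v.injective he))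
        rcases mul_eq_zero.mp h0 with h | h
        · exact absurd h hne
        · exact h
    · rintro ⟨hf, hfs⟩
      refine ⟨xH a * f, ?_, ?_⟩
      · intro τ hτ j k hjk
        subst hjk
        have hgτ : starH (xH a * f) (Equiv.swap j k)
            = xH (Equiv.swap j k a) * starH f (Equiv.swap j k) := by
          rw [starH_mul, starH_xH, Equiv.swap_inv]
        have key : xH a * f - starH (xH a * f) (Equiv.swap j k)
            = xH a * (f - starH f (Equiv.swap j k))
              + (xH a - xH (Equiv.swap j k a)) * starH f (Equiv.swap j k) := by
          rw [hgτ]; ring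
        rw [key]
        exact dvd_add ((hf _ hτ j k rfl).mul_left _) ((dvd_xH_sub_swap j k a).mul_right _)
      · rw [starH_mul, starH_xH, Equiv.swap_inv, Equiv.swap_apply_left, hfs]
        ring
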